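/- arXiv:1911.00995 — 5 statements merged into one kernel-verified Lean document; each statement's English description precedes it below -/
import Mathlib

section
/- There is no constant k such that d^{MH}_2(S,R) ≤ k(d^{MH}_2(S,T) + d^{MH}_2(T,R)) for all finite nonempty subsets S, T, R of every metric space. Concretely: for every k > 0 there exist finite nonempty subsets S, T, R of the real line with the standard metric such that d^{MH}_2(S,R) > k(d^{MH}_2(S,T) + d^{MH}_2(T,R)). -/
/-
Take `T = {0}`, `R = {1}` and let `S` be `n` distinct points in `[0, 1/n]` containing `0`.
Every point of `S` is within `1/n` of `0`, so `d(S, T) ≤ 1`, while `d(T, R) = 2`; but every point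
of `S` is at distance at least `1 - 1/n` from `1`, so `d(S, R) ≥ n - 1`, which is unbounded in `n`.
-/

open Finset Metric

noncomputable def dMH2 (S T : Finset ℝ) : ℝ :=
  (∑ s ∈ S, infDist s (T : Set ℝ)) + (∑ t ∈ T, infDist t (S : Set ℝ))

lemma dMH2_singleton_right (S : Finset ℝ) (a : ℝ) :
    dMH2 S {a} = ∑ s ∈ S, dist s a + infDist a (S : Set ℝ) := by
  simp [dMH2, infDist_singleton]

lemma dMH2_singleton_singleton (a b : ℝ) : dMH2 {a} {b} = 2 * dist a b := by
  rw [dMH2_singleton_right]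
  simp [infDist_singleton, dist_comm]
  ring

lemma dMH2_singleton_le_of_mem {S : Finset ℝ} {a r : ℝ} (ha : a ∈ S)
    (hr : ∀ s ∈ S, dist s a ≤ r) : dMH2 S {a} ≤ #S * r := by
  rw [dMH2_singleton_right, infDist_zero_of_mem (mem_coe.2 ha), add_zero]
  simpa using sum_le_card_nsmul S _ r hr

lemma card_mul_le_dMH2_singleton {S : Finset ℝ} {a r : ℝ} (hr : ∀ s ∈ S, r ≤ dist s a) :
    #S * r ≤ dMH2 S {a} := by
  rw [dMH2_singleton_right]
  have hsum : #S • r ≤ ∑ s ∈ S, dist s a := card_nsmul_le_sum S _ r hr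
  rw [nsmul_eq_mul] at hsum
  linarith [infDist_nonneg (x := a) (s := (S : Set ℝ))]

lemma exists_finset_card_eq_zero_mem_subset_Icc {n : ℕ} (hn : 0 < n) :
    ∃ S : Finset ℝ, #S = n ∧ (0 : ℝ) ∈ S ∧ ∀ s ∈ S, s ∈ Set.Icc 0 (1 / n : ℝ) := by
  have hn' : (0 : ℝ) < n := by exact_mod_cast hn
  have hinj : Function.Injective fun i : ℕ => (i : ℝ) / n ^ 2 := fun i j hij => by
    simpa [div_left_inj' (pow_pos hn' 2).ne'] using hij
  refine ⟨(range n).image fun i : ℕ => (i : ℝ) / n ^ 2, by simp [card_image_of_injective _ hinj],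
    mem_image.2 ⟨0, mem_range.2 hn, by simp⟩, ?_⟩
  simp only [mem_image, mem_range]
  rintro _ ⟨i, hi, rfl⟩
  have hi' : (i : ℝ) ≤ n := by exact_mod_cast hi.le
  refine ⟨by positivity, ?_⟩
  rw [div_le_div_iff₀ (by positivity) hn']
  nlinarith

theorem mh2_no_triangle_constant :
    ∀ k : ℝ, 0 < k → ∃ (S T R : Finset ℝ), S.Nonempty ∧ T.Nonempty ∧ R.Nonempty ∧
      dMH2 S R > k * (dMH2 S T + dMH2 T R) := by
  intro k hk
  obtain ⟨n, hn⟩ := exists_nat_gt (3 * k + 1)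
  have hn' : (0 : ℝ) < n := by linarith
  obtain ⟨S, hcard, h0, hS⟩ :=
    exists_finset_card_eq_zero_mem_subset_Icc (n := n) (by exact_mod_cast hn')
  have hST : dMH2 S {0} ≤ 1 := by
    have := dMH2_singleton_le_of_mem (r := 1 / n) h0 fun s hs => by
      simpa [Real.dist_eq, abs_of_nonneg (hS s hs).1] using (hS s hs).2
    rwa [hcard, mul_one_div_cancel hn'.ne'] at this
  have hSR : n - 1 ≤ dMH2 S {1} := by
    have := card_mul_le_dMH2_singleton (a := 1) fun s hs => by
      rw [Real.dist_eq, abs_sub_comm]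
      exact (sub_le_sub_left (hS s hs).2 1).trans (le_abs_self _)
    rwa [hcard, mul_sub, mul_one, mul_one_div_cancel hn'.ne'] at this
  have hTR : dMH2 {0} {1} = 2 := by norm_num [dMH2_singleton_singleton, Real.dist_eq]
  refine ⟨S, {0}, {1}, ⟨0, h0⟩, singleton_nonempty 0, singleton_nonempty 1, ?_⟩
  rw [hTR]
  nlinarith
end

section
/- There is no constant k such that d^{MH}_1(S,R) ≤ k(d^{MH}_1(S,T) + d^{MH}_1(T,R)) for all finite nonempty subsets S, T, R of every metric space. Concretely: for every k > 0 there exist finite nonempty subsets S, T, R of ℝ such that d^{MH}_1(S,R) > k(d^{MH}_1(S,T) + d^{MH}_1(T,R)). -/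
open Finset Metric

noncomputable def dMH1 (S T : Finset ℝ) : ℝ :=
  max ((∑ s ∈ S, infDist s (T : Set ℝ)) / S.card) ((∑ t ∈ T, infDist t (S : Set ℝ)) / T.card)

/-!
Take `S = {0}`, `R = {0, 1}` and `T = A ∪ {1}`, where `A ∋ 0` is a cluster of many points near `0`
whose distances to `0` sum to at most `1`. Then `d(S, R) = 1/2`, while `T` contains both `S` and
`R`, so `d(S, T)` and `d(T, R)` are averages over the points of `T` of sums bounded by `2` and `1`;
they tend to `0` as `A` grows.
-/

lemma dMH1_comm (S T : Finset ℝ) : dMH1 S T = dMH1 T S :=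
  max_comm _ _

lemma dMH1_eq_of_subset {S T : Finset ℝ} (h : S ⊆ T) :
    dMH1 S T = (∑ t ∈ T, infDist t (S : Set ℝ)) / #T := by
  have hS : ∑ s ∈ S, infDist s (T : Set ℝ) = 0 :=
    sum_eq_zero fun s hs => infDist_zero_of_mem (mem_coe.2 (h hs))
  rw [dMH1, hS, zero_div, max_eq_right]
  exact div_nonneg (sum_nonneg fun _ _ => infDist_nonneg) (Nat.cast_nonneg _)

lemma dMH1_zero_zero_one : dMH1 {0} {0, 1} = 1 / 2 := by
  rw [dMH1_eq_of_subset (by simp), sum_pair zero_ne_one]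
  norm_num [infDist_singleton]

lemma exists_cluster_at_zero (n : ℕ) :
    ∃ A : Finset ℝ, 0 ∈ A ∧ 1 ∉ A ∧ #A = n + 1 ∧ ∑ a ∈ A, |a| ≤ 1 := by
  set f : ℕ → ℝ := fun i => i / (n + 1) ^ 2
  have hf_inj : Function.Injective f := fun i j hij => by
    simpa [f, div_left_inj' (by positivity : ((n : ℝ) + 1) ^ 2 ≠ 0)] using hij
  have hf_bound : ∀ i ∈ range (n + 1), |f i| < 1 / (n + 1) := fun i hi => by
    have hi : (i : ℝ) + 1 ≤ n + 1 := by exact_mod_cast mem_range.1 hi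
    rw [abs_of_nonneg (by positivity), div_lt_div_iff₀ (by positivity) (by positivity)]
    nlinarith
  refine ⟨(range (n + 1)).image f, mem_image.2 ⟨0, by simp [f]⟩, fun h1 => ?_,
    by rw [card_image_of_injective _ hf_inj, card_range], ?_⟩
  · obtain ⟨i, hi, hfi⟩ := mem_image.1 h1
    have := hf_bound i hi
    rw [hfi, abs_one, lt_div_iff₀ (by positivity)] at this
    linarith [n.cast_nonneg (α := ℝ)]
  · calc ∑ a ∈ (range (n + 1)).image f, |a| = ∑ i ∈ range (n + 1), |f i| :=
          sum_image fun i _ j _ hij => hf_inj hij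
      _ ≤ #(range (n + 1)) • (1 / (n + 1 : ℝ)) :=
          sum_le_card_nsmul _ _ _ fun i hi => (hf_bound i hi).le
      _ = 1 := by rw [card_range, nsmul_eq_mul]; push_cast; field_simp

section Cluster

variable {A : Finset ℝ} (h0 : 0 ∈ A) (h1 : 1 ∉ A) (hA : ∑ a ∈ A, |a| ≤ 1)
include h0 h1 hA

lemma dMH1_zero_insert_one_le : dMH1 {0} (insert 1 A) ≤ 2 / #(insert 1 A) := by
  rw [dMH1_eq_of_subset (by simp [h0])]
  gcongr
  simp only [coe_singleton, infDist_singleton, Real.dist_eq, sub_zero, sum_insert h1, abs_one]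
  linarith

lemma dMH1_insert_one_zero_one_le : dMH1 (insert 1 A) {0, 1} ≤ 1 / #(insert 1 A) := by
  rw [dMH1_comm, dMH1_eq_of_subset (by simp [insert_subset_iff, h0]), sum_insert h1]
  gcongr
  calc infDist (1 : ℝ) _ + ∑ a ∈ A, infDist a (({0, 1} : Finset ℝ) : Set ℝ)
      = ∑ a ∈ A, infDist a (({0, 1} : Finset ℝ) : Set ℝ) := by
        rw [infDist_zero_of_mem (by simp), zero_add]
    _ ≤ ∑ a ∈ A, |a| := sum_le_sum fun a _ => by
        simpa [Real.dist_eq] using infDist_le_dist_of_mem (by simp : (0 : ℝ) ∈ _)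
    _ ≤ 1 := hA

end Cluster

theorem mh1_no_triangle_constant :
    ∀ k : ℝ, 0 < k → ∃ (S T R : Finset ℝ), S.Nonempty ∧ T.Nonempty ∧ R.Nonempty ∧
      dMH1 S R > k * (dMH1 S T + dMH1 T R) := by
  intro k hk
  obtain ⟨n, hn⟩ := exists_nat_gt (6 * k)
  obtain ⟨A, h0, h1, hcard, hA⟩ := exists_cluster_at_zero n
  refine ⟨{0}, insert 1 A, {0, 1}, singleton_nonempty 0, insert_nonempty 1 A,
    insert_nonempty 0 {1}, ?_⟩
  have hT : (#(insert 1 A) : ℝ) = n + 2 := by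
    rw [card_insert_of_notMem h1, hcard]; push_cast; ring
  calc k * (dMH1 {0} (insert 1 A) + dMH1 (insert 1 A) {0, 1})
      ≤ k * (2 / (n + 2) + 1 / (n + 2)) := by
        rw [← hT]
        gcongr
        exacts [dMH1_zero_insert_one_le h0 h1 hA, dMH1_insert_one_zero_one_le h0 h1 hA]
    _ < 1 / 2 := by
        rw [← add_div, mul_div_assoc', div_lt_iff₀ (by positivity)]
        linarith
    _ = dMH1 {0} {0, 1} := dMH1_zero_zero_one.symm
end

section
/- There is no constant k such that d^{MH}_3(S,R) ≤ k(d^{MH}_3(S,T) + d^{MH}_3(T,R)) for all finite nonempty subsets S, T, R of every metric space. Concretely: for every k > 0 there exist finite nonempty subsets S, T, R of ℝ such that d^{MH}_3(S,R) > k(d^{MH}_3(S,T) + d^{MH}_3(T,R)). -/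
/-! Cluster `n` points within `1/n` to the left of `0` (the set `S`) and `n` points within `1/n`
to the right of `1` (the set `R`), and let `T = {0, 1}`. Every point of `S` is at distance at least
`1` from `R` and vice versa, so `d(S, R) ≥ 1`. But `T` shares the point `0` with `S`: the `n`
points of `S` each contribute at most `1/n` and the two points of `T` at most `1`, so
`d(S, T) ≤ 3 / (n + 2)`, and likewise `d(T, R)`. -/

open Finset Metric

noncomputable def dMH3 (S T : Finset ℝ) : ℝ :=
  (1 / (S.card + T.card : ℝ)) *
    ((∑ s ∈ S, infDist s (T : Set ℝ)) + (∑ t ∈ T, infDist t (S : Set ℝ)))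

theorem dMH3_comm (S T : Finset ℝ) : dMH3 S T = dMH3 T S := by
  rw [dMH3, dMH3, add_comm (S.card : ℝ), add_comm (∑ s ∈ S, _)]

theorem dMH3_le_of_infDist_le {S T : Finset ℝ} {a b : ℝ}
    (hS : ∀ s ∈ S, infDist s (T : Set ℝ) ≤ a) (hT : ∀ t ∈ T, infDist t (S : Set ℝ) ≤ b) :
    dMH3 S T ≤ (#S * a + #T * b) / (#S + #T) := by
  rw [dMH3, one_div_mul_eq_div]
  gcongr
  · exact (sum_le_card_nsmul S _ a hS).trans_eq (nsmul_eq_mul _ _)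
  · exact (sum_le_card_nsmul T _ b hT).trans_eq (nsmul_eq_mul _ _)

theorem le_dMH3_of_le_dist {S T : Finset ℝ} {a : ℝ} (hS : S.Nonempty) (hT : T.Nonempty)
    (h : ∀ s ∈ S, ∀ t ∈ T, a ≤ dist s t) : a ≤ dMH3 S T := by
  have hS' : ∀ s ∈ S, a ≤ infDist s (T : Set ℝ) := fun s hs =>
    (le_infDist (by simpa using hT)).2 fun t ht => h s hs t ht
  have hT' : ∀ t ∈ T, a ≤ infDist t (S : Set ℝ) := fun t ht =>
    (le_infDist (by simpa using hS)).2 fun s hs => dist_comm s t ▸ h s hs t ht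
  have hpos : (0 : ℝ) < #S + #T := by positivity
  rw [dMH3, one_div_mul_eq_div, le_div_iff₀ hpos]
  have hSsum := card_nsmul_le_sum S _ a hS'
  have hTsum := card_nsmul_le_sum T _ a hT'
  rw [nsmul_eq_mul] at hSsum hTsum
  linarith

theorem dMH3_le_of_mem_of_mem {S T : Finset ℝ} {c a b : ℝ} (hcS : c ∈ S) (hcT : c ∈ T)
    (hS : ∀ s ∈ S, dist s c ≤ a) (hT : ∀ t ∈ T, dist t c ≤ b) :
    dMH3 S T ≤ (#S * a + #T * b) / (#S + #T) :=
  dMH3_le_of_infDist_le (fun s hs => (infDist_le_dist_of_mem (by simpa using hcT)).trans (hS s hs))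
    (fun t ht => (infDist_le_dist_of_mem (by simpa using hcS)).trans (hT t ht))

theorem one_le_dMH3_of_forall_nonpos_of_forall_one_le {S R : Finset ℝ} (hS : S.Nonempty)
    (hR : R.Nonempty) (hS0 : ∀ s ∈ S, s ≤ 0) (hR1 : ∀ r ∈ R, 1 ≤ r) : 1 ≤ dMH3 S R :=
  le_dMH3_of_le_dist hS hR fun s hs r hr => by
    have := hS0 s hs
    have := hR1 r hr
    rw [Real.dist_eq, abs_sub_comm, abs_of_nonneg (by linarith)]
    linarith

noncomputable def fineGrid (n : ℕ) : Finset ℝ := (range n).image fun i : ℕ => (i : ℝ) / n ^ 2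

theorem card_fineGrid (n : ℕ) : #(fineGrid n) = n := by
  rw [fineGrid, card_image_of_injOn, card_range]
  intro i hi j _ hij
  have hn : (n : ℝ) ^ 2 ≠ 0 := by
    have : (n : ℝ) ≠ 0 := by exact_mod_cast (mem_range.1 hi).ne_bot
    positivity
  exact_mod_cast (div_left_inj' hn).1 hij

theorem zero_mem_fineGrid {n : ℕ} (hn : 0 < n) : (0 : ℝ) ∈ fineGrid n :=
  mem_image.2 ⟨0, mem_range.2 hn, by simp⟩

theorem fineGrid_subset_Icc (n : ℕ) : (fineGrid n : Set ℝ) ⊆ Set.Icc 0 (1 / n) := by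
  intro x hx
  obtain ⟨i, hi, rfl⟩ := mem_image.1 hx
  have hin : (i : ℝ) < n := by exact_mod_cast mem_range.1 hi
  have hn : (0 : ℝ) < n := (Nat.cast_nonneg i).trans_lt hin
  refine ⟨by positivity, ?_⟩
  rw [div_le_div_iff₀ (by positivity) hn]
  nlinarith

theorem dMH3_image_fineGrid_pair_le {n : ℕ} (hn : 0 < n) {f : ℝ → ℝ} (hf : Isometry f)
    (hf0 : f 0 ∈ ({0, 1} : Finset ℝ)) :
    dMH3 ((fineGrid n).image f) {0, 1} ≤ 3 / (n + 2) := by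
  have hcard : #((fineGrid n).image f) = n := by
    rw [card_image_of_injective _ hf.injective, card_fineGrid]
  have hS : ∀ s ∈ (fineGrid n).image f, dist s (f 0) ≤ 1 / n := by
    rintro _ hs
    obtain ⟨x, hx, rfl⟩ := mem_image.1 hs
    have hx := fineGrid_subset_Icc n hx
    rw [hf.dist_eq, Real.dist_0_eq_abs, abs_of_nonneg hx.1]
    exact hx.2
  have hT : ∀ t ∈ ({0, 1} : Finset ℝ), dist t (f 0) ≤ 1 := by
    simp only [mem_insert, mem_singleton] at hf0 ⊢
    rintro t (rfl | rfl) <;> rcases hf0 with h | h <;> simp [h]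
  refine (dMH3_le_of_mem_of_mem (mem_image_of_mem f (zero_mem_fineGrid hn)) hf0 hS hT).trans_eq ?_
  rw [hcard, card_pair zero_ne_one]
  field_simp
  ring

theorem mh3_no_triangle_constant :
    ∀ k : ℝ, 0 < k → ∃ (S T R : Finset ℝ), S.Nonempty ∧ T.Nonempty ∧ R.Nonempty ∧
      dMH3 S R > k * (dMH3 S T + dMH3 T R) := by
  intro k hk
  set n := ⌈6 * k⌉₊
  have hn : 0 < n := Nat.ceil_pos.2 (by positivity)
  have h0 := zero_mem_fineGrid hn
  refine ⟨(fineGrid n).image (-·), {0, 1}, (fineGrid n).image (1 + ·),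
    ⟨_, mem_image_of_mem _ h0⟩, insert_nonempty _ _, ⟨_, mem_image_of_mem _ h0⟩, ?_⟩
  have hST := dMH3_image_fineGrid_pair_le hn isometry_neg (by simp)
  have hTR := dMH3_comm _ _ ▸ dMH3_image_fineGrid_pair_le hn (isometry_add_left 1) (by simp)
  have hSR := one_le_dMH3_of_forall_nonpos_of_forall_one_le (S := (fineGrid n).image (-·))
    (R := (fineGrid n).image (1 + ·)) ⟨_, mem_image_of_mem _ h0⟩ ⟨_, mem_image_of_mem _ h0⟩
    (forall_mem_image.2 fun x hx => neg_nonpos.2 (fineGrid_subset_Icc n hx).1)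
    (forall_mem_image.2 fun x hx => le_add_of_nonneg_right (fineGrid_subset_Icc n hx).1)
  have h6k : 6 * k ≤ n := Nat.le_ceil _
  calc k * (dMH3 _ _ + dMH3 _ _) ≤ k * (3 / (n + 2) + 3 / (n + 2)) := by gcongr
    _ = 6 * k / (n + 2) := by ring
    _ < 1 := by rw [div_lt_one (by positivity)]; linarith
    _ ≤ _ := hSR
end

section
/- For every p > 0 and every k > 0, there exist finite nonempty subsets S, T, R of ℝ with the Euclidean metric such that d^p_{MJ}(S,R) > k(d^p_{MJ}(S,T) + d^p_{MJ}(T,R)). Hence the MJ_p semi-metrics fail the triangle inequality up to any constant. -/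
open Finset Metric

noncomputable def dMJ (p : ℝ) (S T : Finset ℝ) : ℝ :=
  ((∑ t ∈ T, infDist t (S : Set ℝ) ^ p) / (2 * T.card)
    + (∑ s ∈ S, infDist s (T : Set ℝ) ^ p) / (2 * S.card)) ^ (1 / p)

/-! With `S = {0}` and `R = {1, B}`, the far point `B` forces `d_MJ(S, R) ≥ B / 4^(1/p)`.
Take `T = C ∪ {0, 1, B}` with `C` a cluster of at least `B^p` points of `[0, 1]`. Then `T`
contains `S` and `R`, lies within distance `1` of `R`, and within distance `1` of `S` except
for the single point `B`, whose contribution `B^p / (2|T|)` to `d_MJ(S, T)^p` is diluted by the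
cluster. So `d_MJ(S, T), d_MJ(T, R) ≤ 1`, while `d_MJ(S, R)` grows without bound in `B`. -/

noncomputable def dMJPow (p : ℝ) (S T : Finset ℝ) : ℝ :=
  (∑ t ∈ T, infDist t (S : Set ℝ) ^ p) / (2 * T.card)
    + (∑ s ∈ S, infDist s (T : Set ℝ) ^ p) / (2 * S.card)

section General

variable {p c : ℝ} {S T : Finset ℝ}

theorem dMJ_eq_dMJPow_rpow : dMJ p S T = dMJPow p S T ^ (1 / p) := rfl

theorem sum_rpow_infDist_div_nonneg (A : Set ℝ) :
    0 ≤ (∑ t ∈ T, infDist t A ^ p) / (2 * T.card) :=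
  div_nonneg (sum_nonneg fun _ _ => Real.rpow_nonneg infDist_nonneg p) (by positivity)

theorem dMJPow_nonneg : 0 ≤ dMJPow p S T :=
  add_nonneg (sum_rpow_infDist_div_nonneg _) (sum_rpow_infDist_div_nonneg _)

theorem dMJ_le_iff (hp : 0 < p) (hc : 0 ≤ c) : dMJ p S T ≤ c ↔ dMJPow p S T ≤ c ^ p := by
  rw [dMJ_eq_dMJPow_rpow, one_div]
  exact Real.rpow_inv_le_iff_of_pos dMJPow_nonneg hc hp

theorem le_dMJ_iff (hp : 0 < p) (hc : 0 ≤ c) : c ≤ dMJ p S T ↔ c ^ p ≤ dMJPow p S T := by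
  rw [dMJ_eq_dMJPow_rpow, one_div]
  exact Real.le_rpow_inv_iff_of_pos hc dMJPow_nonneg hp

theorem sum_rpow_infDist_div_le (hp : 0 ≤ p) (hc : 0 ≤ c) {A : Set ℝ}
    (h : ∀ t ∈ T, infDist t A ≤ c) :
    (∑ t ∈ T, infDist t A ^ p) / (2 * T.card) ≤ c ^ p / 2 := by
  rcases T.eq_empty_or_nonempty with rfl | hT
  · simp only [sum_empty, zero_div]
    positivity
  rw [div_le_iff₀ (by positivity)]
  calc ∑ t ∈ T, infDist t A ^ p
      ≤ T.card • c ^ p :=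
        sum_le_card_nsmul _ _ _ fun t ht => Real.rpow_le_rpow infDist_nonneg (h t ht) hp
    _ = c ^ p / 2 * (2 * T.card) := by rw [nsmul_eq_mul]; ring

theorem dMJ_le_of_forall_infDist_le (hp : 0 < p) (hc : 0 ≤ c)
    (hT : ∀ t ∈ T, infDist t S ≤ c) (hS : ∀ s ∈ S, infDist s T ≤ c) : dMJ p S T ≤ c := by
  rw [dMJ_le_iff hp hc, dMJPow]
  linarith [sum_rpow_infDist_div_le hp.le hc hT, sum_rpow_infDist_div_le hp.le hc hS]

theorem dMJPow_of_subset (hp : p ≠ 0) (h : S ⊆ T) :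
    dMJPow p S T = (∑ t ∈ T, infDist t S ^ p) / (2 * T.card) := by
  have hzero : ∑ s ∈ S, infDist s (T : Set ℝ) ^ p = 0 := sum_eq_zero fun s hs => by
    rw [infDist_zero_of_mem (mem_coe.2 (h hs)), Real.zero_rpow hp]
  rw [dMJPow, hzero, zero_div, add_zero]

theorem dMJ_le_one_of_subset_of_outlier (hp : 0 < p) (h : S ⊆ T) {b : ℝ} (hb : b ∈ T)
    (hnear : ∀ t ∈ T, t ≠ b → infDist t S ≤ 1) (hfar : infDist b S ^ p ≤ T.card) :
    dMJ p S T ≤ 1 := by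
  have hcard : (0 : ℝ) < T.card := Nat.cast_pos.2 (card_pos.2 ⟨b, hb⟩)
  rw [dMJ_le_iff hp zero_le_one, Real.one_rpow, dMJPow_of_subset hp.ne' h,
    div_le_one (by positivity), ← add_sum_erase T _ hb]
  have hrest : ∑ t ∈ T.erase b, infDist t S ^ p ≤ T.card :=
    calc ∑ t ∈ T.erase b, infDist t S ^ p
        ≤ (T.erase b).card • (1 : ℝ) := sum_le_card_nsmul _ _ _ fun t ht =>
          Real.rpow_le_one infDist_nonneg (hnear t (mem_of_mem_erase ht) (ne_of_mem_erase ht)) hp.le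
      _ ≤ T.card := by rw [nsmul_one]; exact_mod_cast card_erase_le
  linarith

theorem le_dMJ_of_mem (hp : 0 < p) (hc : 0 ≤ c) {r : ℝ} (hr : r ∈ T)
    (h : 2 * T.card * c ^ p ≤ infDist r S ^ p) : c ≤ dMJ p S T := by
  have hcard : (0 : ℝ) < T.card := Nat.cast_pos.2 (card_pos.2 ⟨r, hr⟩)
  have hsum : infDist r S ^ p ≤ ∑ t ∈ T, infDist t S ^ p :=
    single_le_sum (fun t _ => Real.rpow_nonneg (infDist_nonneg (x := t) (s := (S : Set ℝ))) p) hr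
  have hS := sum_rpow_infDist_div_nonneg (p := p) (T := S) (T : Set ℝ)
  have hT : c ^ p ≤ (∑ t ∈ T, infDist t S ^ p) / (2 * T.card) := by
    rw [le_div_iff₀ (by positivity)]
    linarith
  rw [le_dMJ_iff hp hc, dMJPow]
  linarith

end General

section Counterexample

variable {p B : ℝ} {C : Finset ℝ}

theorem infDist_singleton_zero (x : ℝ) : infDist x (({0} : Finset ℝ) : Set ℝ) = |x| := by
  rw [coe_singleton, infDist_singleton, Real.dist_eq, sub_zero]

theorem mem_Icc_of_mem_union_of_ne (hC : (C : Set ℝ) ⊆ Set.Icc 0 1) {t : ℝ}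
    (ht : t ∈ C ∪ {0, 1, B}) (hne : t ≠ B) : t ∈ Set.Icc (0 : ℝ) 1 := by
  simp only [mem_union, mem_insert, mem_singleton] at ht
  rcases ht with ht | rfl | rfl | rfl
  · exact hC ht
  · simp
  · simp
  · exact absurd rfl hne

theorem dMJ_zero_union_le_one (hp : 0 < p) (hC : (C : Set ℝ) ⊆ Set.Icc 0 1)
    (hB : |B| ^ p ≤ C.card) : dMJ p {0} (C ∪ {0, 1, B}) ≤ 1 := by
  refine dMJ_le_one_of_subset_of_outlier hp (by simp) (b := B) (by simp) (fun t ht hne => ?_) ?_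
  · obtain ⟨h0, h1⟩ := mem_Icc_of_mem_union_of_ne hC ht hne
    rw [infDist_singleton_zero, abs_of_nonneg h0]
    exact h1
  · rw [infDist_singleton_zero]
    exact hB.trans (Nat.cast_le.2 (card_le_card subset_union_left))

theorem dMJ_union_pair_le_one (hp : 0 < p) (hC : (C : Set ℝ) ⊆ Set.Icc 0 1) :
    dMJ p (C ∪ {0, 1, B}) {1, B} ≤ 1 := by
  refine dMJ_le_of_forall_infDist_le hp zero_le_one (fun r hr => ?_) (fun t ht => ?_)
  · rw [infDist_zero_of_mem (mem_coe.2 (subset_union_right (subset_insert 0 _ hr)))]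
    exact zero_le_one
  · by_cases hne : t = B
    · rw [infDist_zero_of_mem (by simp [hne])]
      exact zero_le_one
    obtain ⟨h0, h1⟩ := mem_Icc_of_mem_union_of_ne hC ht hne
    calc infDist t (({1, B} : Finset ℝ) : Set ℝ) ≤ dist t 1 := infDist_le_dist_of_mem (by simp)
      _ ≤ 1 := by rw [Real.dist_eq, abs_le]; constructor <;> linarith

theorem div_rpow_inv_le_dMJ_zero_pair (hp : 0 < p) (hB : 0 ≤ B) :
    B / 4 ^ p⁻¹ ≤ dMJ p {0} {1, B} := by
  refine le_dMJ_of_mem hp (by positivity) (r := B) (by simp) ?_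
  have hcard : (({1, B} : Finset ℝ).card : ℝ) ≤ 2 := by exact_mod_cast card_le_two
  rw [infDist_singleton_zero, abs_of_nonneg hB,
    Real.div_rpow hB (by positivity), Real.rpow_inv_rpow (by norm_num) hp.ne']
  have : 0 ≤ B ^ p := by positivity
  nlinarith

end Counterexample

theorem mj_no_triangle_constant :
    ∀ p : ℝ, 0 < p → ∀ k : ℝ, 0 < k → ∃ (S T R : Finset ℝ),
      S.Nonempty ∧ T.Nonempty ∧ R.Nonempty ∧
      dMJ p S R > k * (dMJ p S T + dMJ p T R) := by
  intro p hp k hk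
  set B := (4 : ℝ) ^ p⁻¹ * (3 * k) with hB
  obtain ⟨C, hC, hCcard⟩ := (Set.Icc_infinite (zero_lt_one' ℝ)).exists_subset_card_eq ⌈|B| ^ p⌉₊
  have hBC : |B| ^ p ≤ C.card := hCcard ▸ Nat.le_ceil _
  refine ⟨{0}, C ∪ {0, 1, B}, {1, B}, by simp, by simp, by simp, ?_⟩
  calc k * (dMJ p {0} (C ∪ {0, 1, B}) + dMJ p (C ∪ {0, 1, B}) {1, B})
      ≤ k * (1 + 1) := by
        gcongr
        exacts [dMJ_zero_union_le_one hp hC hBC, dMJ_union_pair_le_one hp hC]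
    _ < B / 4 ^ p⁻¹ := by rw [hB, mul_div_cancel_left₀ _ (by positivity)]; linarith
    _ ≤ dMJ p {0} {1, B} := div_rpow_inv_le_dMJ_zero_pair hp (by positivity)
end

section
/- Fix a finite nonempty set S ⊂ ℝ and fixed points t_1, ..., t_{n−1} ∈ ℝ, and let T(t) = {t_1, ..., t_{n−1}, t}. Then d^{MH}_1(S, T(t)) / |t| → 1/n as |t| → ∞. -/
open Finset Metric Filter

/-!
Once `t ∉ T₀`, the second term of `dMH1 S (insert t T₀)` is `(d(t, S) + c) / n` with `c`
independent of `t`, and `d(t, S) = |t| + O(1)` because `S` is bounded. The first term is bounded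
when `T₀ ≠ ∅` (adding `t` only shrinks distances to the set), and is at most
`|t| + O(1) = |t| / n + O(1)` when `T₀ = ∅`, since then `n = 1`.
So `dMH1 S (insert t T₀) = |t| / n + O(1)`.
-/

open Asymptotics Topology

theorem Metric.abs_infDist_sub_dist_le_of_subset_closedBall {X : Type*} [PseudoMetricSpace X]
    {s : Set X} {x y : X} {r : ℝ} (hs : s.Nonempty) (hsub : s ⊆ closedBall y r) :
    |infDist x s - dist x y| ≤ r := by
  obtain ⟨z, hz⟩ := hs
  have hzy : dist z y ≤ r := hsub hz
  refine abs_le.2 ⟨?_, ?_⟩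
  · by_contra! hlt
    obtain ⟨w, hw, hxw⟩ :=
      (infDist_lt_iff ⟨z, hz⟩).1 (show infDist x s < dist x y - r by linarith)
    have : dist w y ≤ r := hsub hw
    linarith [dist_triangle x w y]
  · linarith [infDist_le_dist_of_mem (x := x) hz, dist_triangle x y z, dist_comm z y]

theorem tendsto_div_of_isBigO_one_sub_mul {α : Type*} {l : Filter α} {f g : α → ℝ} {k : ℝ}
    (hg : Tendsto g l atTop) (h : (fun x => f x - k * g x) =O[l] fun _ => (1 : ℝ)) :
    Tendsto (fun x => f x / g x) l (𝓝 k) := by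
  have hlittle : (fun x => f x - k * g x) =o[l] g :=
    h.trans_isLittleO ((isLittleO_one_left_iff ℝ).2 (tendsto_norm_atTop_atTop.comp hg))
  refine (by simpa using hlittle.tendsto_div_nhds_zero.add_const k :
    Tendsto (fun x => (f x - k * g x) / g x + k) l (𝓝 k)).congr' ?_
  filter_upwards [hg.eventually_gt_atTop 0] with x hx
  field_simp
  ring

theorem abs_max_sub_le_of_le_add_of_abs_sub_le {a b g C D : ℝ} (ha : a ≤ g + C)
    (hb : |b - g| ≤ D) : |max a b - g| ≤ max C D := by
  obtain ⟨hb₁, hb₂⟩ := abs_le.1 hb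
  refine abs_le.2 ⟨by linarith [le_max_right a b, le_max_right C D], ?_⟩
  rw [sub_le_iff_le_add]
  exact max_le (by linarith [le_max_left C D]) (by linarith [le_max_right C D])

section

variable {S T₀ : Finset ℝ} {R : ℝ}

theorem abs_sum_infDist_insert_div_card_sub_le (hS : S.Nonempty)
    (hR : (S : Set ℝ) ⊆ closedBall 0 R) {t : ℝ} (ht : t ∉ T₀) :
    |(∑ x ∈ insert t T₀, infDist x (S : Set ℝ)) / (insert t T₀).card
        - |t| / (T₀.card + 1)| ≤ R + ∑ x ∈ T₀, infDist x (S : Set ℝ) := by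
  have hdist := abs_infDist_sub_dist_le_of_subset_closedBall (x := t) hS.to_set hR
  rw [Real.dist_0_eq_abs] at hdist
  have hc : 0 ≤ ∑ x ∈ T₀, infDist x (S : Set ℝ) := sum_nonneg fun _ _ => infDist_nonneg
  rw [sum_insert ht, card_insert_of_notMem ht, Nat.cast_succ, ← sub_div, abs_div,
    abs_of_pos (Nat.cast_add_one_pos (α := ℝ) T₀.card)]
  refine (div_le_self (abs_nonneg _) (le_add_of_nonneg_left (Nat.cast_nonneg _))).trans
    (abs_le.2 ⟨?_, ?_⟩) <;> linarith [abs_le.1 hdist]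

theorem exists_sum_infDist_insert_div_card_le (hS : S.Nonempty)
    (hR : (S : Set ℝ) ⊆ closedBall 0 R) : ∃ C, ∀ t,
      (∑ s ∈ S, infDist s ((insert t T₀ : Finset ℝ) : Set ℝ)) / S.card
        ≤ |t| / (T₀.card + 1) + C := by
  rcases T₀.eq_empty_or_nonempty with rfl | hT₀
  · refine ⟨R, fun t => ?_⟩
    have hdist : ∀ s ∈ S, dist s t ≤ |t| + R := fun s hs => by
      have : dist s 0 ≤ R := hR hs
      linarith [dist_triangle s 0 t, Real.dist_0_eq_abs t, dist_comm t 0]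
    simp only [insert_empty, coe_singleton, infDist_singleton, card_empty, Nat.cast_zero,
      zero_add, div_one]
    rw [div_le_iff₀ (by exact_mod_cast hS.card_pos), mul_comm]
    simpa only [nsmul_eq_mul] using sum_le_card_nsmul S _ _ hdist
  · refine ⟨(∑ s ∈ S, infDist s (T₀ : Set ℝ)) / S.card, fun t => ?_⟩
    have hle : (∑ s ∈ S, infDist s ((insert t T₀ : Finset ℝ) : Set ℝ)) / S.card
        ≤ (∑ s ∈ S, infDist s (T₀ : Set ℝ)) / S.card := by
      gcongr with s
      exact infDist_le_infDist_of_subset (by simp) hT₀.to_set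
    linarith [show 0 ≤ |t| / (T₀.card + 1) by positivity]

end

theorem mh1_outlier_asymptotic (S T₀ : Finset ℝ) (hS : S.Nonempty)
    (n : ℕ) (hn : n = T₀.card + 1) :
    Tendsto (fun t : ℝ => dMH1 S (insert t T₀) / |t|)
      (cocompact ℝ) (nhds (1 / n)) := by
  rw [hn, Nat.cast_succ]
  obtain ⟨R, hR⟩ := S.finite_toSet.isBounded.subset_closedBall 0
  obtain ⟨C, hC⟩ := exists_sum_infDist_insert_div_card_le (T₀ := T₀) hS hR
  refine tendsto_div_of_isBigO_one_sub_mul (tendsto_norm_cocompact_atTop (E := ℝ))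
    ((isBigO_one_iff ℝ).2
      ⟨max C (R + ∑ x ∈ T₀, infDist x (S : Set ℝ)), eventually_map.2 ?_⟩)
  filter_upwards [T₀.finite_toSet.isCompact.compl_mem_cocompact] with t ht
  rw [Real.norm_eq_abs, one_div_mul_eq_div]
  exact abs_max_sub_le_of_le_add_of_abs_sub_le (hC t)
    (abs_sum_infDist_insert_div_card_sub_le hS hR ht)
end
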